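/- Let n be a positive integer not divisible by 3 and let m ≥ 2 be an integer. Then the subgroup of GL(3,ℂ) generated by E, L_n and Y₁(m) (this is the group W(n, m)) has order 3^{m+1}·n². -/

import Mathlib

/-!
Conjugation by `E` permutes the diagonal entries of a diagonal matrix cyclically. Hence with
`L' = E L_n E⁻¹ = diag(ν, ν⁻¹, 1)` we have `E L' E⁻¹ = (L_n L')⁻¹` and, because `ω = μ^{3^{m-1}}`
satisfies `ω^{3^{m-1}} = 1` once `m ≥ 2`, also `E Y₁(m) E⁻¹ = Y₁(m)^{3^{m-1}+1}`. So `E`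
(of order 3) normalizes the abelian group `D = ⟨Y₁(m)⟩⟨L_n⟩⟨L'⟩`, and `W(n, m) = D ⋊ ⟨E⟩` since no nontrivial
power of `E` is diagonal. In `D` the three cyclic factors have orders `3^m`, `n`, `n`; the first
diagonal entry separates `⟨L_n⟩` from `⟨L'⟩`, and `⟨Y₁(m)⟩` meets `⟨L_n, L'⟩` trivially because
`3 ∤ n`. Therefore `|W(n, m)| = 3^m · n² · 3`.
-/

open Matrix

/-- The matrix `E` with entries `E₀₁ = E₁₂ = E₂₀ = 1` and all other entries `0`. -/
noncomputable def Ematrix : Matrix (Fin 3) (Fin 3) ℂ := !![0, 1, 0; 0, 0, 1; 1, 0, 0]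

/-- The matrix `L_n = diag(1, ν, ν⁻¹)` with `ν = exp(2πi/n)`. -/
noncomputable def Lmatrix (n : ℕ) : Matrix (Fin 3) (Fin 3) ℂ :=
  Matrix.diagonal ![1, Complex.exp (2 * (Real.pi : ℂ) * Complex.I / (n : ℂ)),
    (Complex.exp (2 * (Real.pi : ℂ) * Complex.I / (n : ℂ)))⁻¹]

/-- The matrix `Y₁(m) = diag(μ, μω, μω²)`, with `μ = exp(2πi/3^m)` and `ω = exp(2πi/3)`. -/
noncomputable def Y1matrix (m : ℕ) : Matrix (Fin 3) (Fin 3) ℂ :=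
  Matrix.diagonal ![Complex.exp (2 * (Real.pi : ℂ) * Complex.I / ((3 : ℂ) ^ m)),
    Complex.exp (2 * (Real.pi : ℂ) * Complex.I / ((3 : ℂ) ^ m)) *
      Complex.exp (2 * (Real.pi : ℂ) * Complex.I / 3),
    Complex.exp (2 * (Real.pi : ℂ) * Complex.I / ((3 : ℂ) ^ m)) *
      Complex.exp (2 * (Real.pi : ℂ) * Complex.I / 3) ^ 2]

open Subgroup

namespace Subgroup

variable {G : Type*} [Group G]

theorem card_sup_eq_mul_of_le_normalizer {N H : Subgroup G} (hH : H ≤ normalizer (N : Set G))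
    (hNH : Disjoint N H) : Nat.card ↥(N ⊔ H) = Nat.card N * Nat.card H := by
  rw [← Nat.card_prod]
  refine (Nat.card_congr (Equiv.ofBijective
    (fun p : N × H => (⟨p.1 * p.2, mul_mem_sup p.1.2 p.2.2⟩ : ↥(N ⊔ H))) ⟨?_, ?_⟩)).symm
  · exact fun p q hpq => mul_injective_of_disjoint hNH (congrArg Subtype.val hpq)
  · rintro ⟨x, hx⟩
    rw [← SetLike.mem_coe, coe_mul_of_right_le_normalizer_left N H hH] at hx
    obtain ⟨a, ha, b, hb, rfl⟩ := hx
    exact ⟨(⟨a, ha⟩, ⟨b, hb⟩), rfl⟩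

theorem closure_triple_eq_sup (e l y : G) :
    closure {e, l, y} = (zpowers y ⊔ (zpowers l ⊔ zpowers (e * l * e⁻¹))) ⊔ zpowers e := by
  have he : e ∈ closure {e, l, y} := subset_closure (by simp)
  have hl : l ∈ closure {e, l, y} := subset_closure (by simp)
  have hy : y ∈ closure {e, l, y} := subset_closure (by simp)
  refine le_antisymm (closure_le _ |>.mpr ?_) ?_
  · rintro x (rfl | rfl | rfl)
    · exact mem_sup_right (mem_zpowers x)
    · exact mem_sup_left (mem_sup_right (mem_sup_left (mem_zpowers x)))
    · exact mem_sup_left (mem_sup_left (mem_zpowers x))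
  · simp only [sup_le_iff, zpowers_le]
    exact ⟨⟨hy, hl, mul_mem (mul_mem he hl) (inv_mem he)⟩, he⟩

end Subgroup

section PiOrder

variable {ι G : Type*} [Group G]

theorem Pi.zpow_eq_one_iff_of_forall_mem_zpowers {v : ι → G} {i₀ : ι}
    (hv : ∀ i, v i ∈ zpowers (v i₀)) (k : ℤ) : v ^ k = 1 ↔ v i₀ ^ k = 1 := by
  refine ⟨fun h => congrFun h i₀, fun h => funext fun i => ?_⟩
  obtain ⟨j, hj⟩ := mem_zpowers_iff.mp (hv i)
  rw [Pi.pow_apply, ← hj, ← _root_.zpow_mul, mul_comm, _root_.zpow_mul, h, _root_.one_zpow,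
    Pi.one_apply]

theorem Pi.orderOf_eq_of_forall_mem_zpowers {v : ι → G} {i₀ : ι}
    (hv : ∀ i, v i ∈ zpowers (v i₀)) : orderOf v = orderOf (v i₀) :=
  orderOf_eq_orderOf_iff.mpr fun k => by
    exact_mod_cast Pi.zpow_eq_one_iff_of_forall_mem_zpowers hv k

end PiOrder

theorem Ematrix_apply (i j : Fin 3) : Ematrix i j = if j = i + 1 then 1 else 0 := by
  fin_cases i <;> fin_cases j <;> rfl

open Fin.NatCast in
theorem Ematrix_pow_apply (k : ℕ) (i j : Fin 3) :
    (Ematrix ^ k) i j = if j = i + (k : Fin 3) then 1 else 0 := by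
  induction k generalizing j with
  | zero => simp [one_apply, eq_comm]
  | succ k ih =>
    simp only [pow_succ, mul_apply, ih, Ematrix_apply, ite_mul, one_mul, zero_mul,
      Finset.sum_ite_eq', Finset.mem_univ, if_true, Nat.cast_succ, add_assoc]

open Fin.NatCast in
theorem Ematrix_pow_three : Ematrix ^ 3 = 1 := by
  ext i j
  rw [Ematrix_pow_apply, one_apply, show ((3 : ℕ) : Fin 3) = 0 from rfl, add_zero]
  simp only [eq_comm]

theorem Ematrix_mul_diagonal (v : Fin 3 → ℂ) :
    Ematrix * diagonal v = diagonal (fun i => v (i + 1)) * Ematrix := by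
  ext i j
  rw [mul_diagonal, diagonal_mul, Ematrix_apply]
  split_ifs with h <;> simp [h]

def diagonalGL {ι R : Type*} [Fintype ι] [DecidableEq ι] [CommRing R] : (ι → Rˣ) →* GL ι R :=
  (Units.map (diagonalRingHom ι R : (ι → R) →* Matrix ι ι R)).comp
    MulEquiv.piUnits.symm.toMonoidHom

section diagonalGL

variable {ι R : Type*} [Fintype ι] [DecidableEq ι] [CommRing R]

@[simp]
theorem diagonalGL_val (v : ι → Rˣ) :
    (diagonalGL v : Matrix ι ι R) = diagonal (fun i => (v i : R)) :=
  rfl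

theorem diagonalGL_injective : Function.Injective (diagonalGL : (ι → Rˣ) →* GL ι R) := by
  intro v w h
  funext i
  exact Units.ext (congrFun (diagonal_injective (congrArg Units.val h)) i)

end diagonalGL

def cycleShift {K : Type*} [Monoid K] : (Fin 3 → K) →* (Fin 3 → K) :=
  MonoidHom.pi fun i => Pi.evalMonoidHom (fun _ => K) (i + 1)

@[simp]
theorem cycleShift_apply {K : Type*} [Monoid K] (v : Fin 3 → K) (i : Fin 3) :
    cycleShift v i = v (i + 1) :=
  rfl

namespace Ematrix

variable {E : GL (Fin 3) ℂ}

theorem conj_diagonalGL (hE : (E : Matrix (Fin 3) (Fin 3) ℂ) = Ematrix) (v : Fin 3 → ℂˣ) :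
    E * diagonalGL v * E⁻¹ = diagonalGL (cycleShift v) := by
  rw [mul_inv_eq_iff_eq_mul]
  ext : 1
  simp only [Units.val_mul, hE, diagonalGL_val, cycleShift_apply, Ematrix_mul_diagonal]

theorem orderOf_eq_three (hE : (E : Matrix (Fin 3) (Fin 3) ℂ) = Ematrix) : orderOf E = 3 := by
  refine orderOf_eq_prime (Units.ext ?_) fun h => ?_
  · rw [Units.val_pow_eq_pow_val, hE, Ematrix_pow_three, Units.val_one]
  · have h01 := congrArg (fun M : GL (Fin 3) ℂ => (M : Matrix (Fin 3) (Fin 3) ℂ) 0 1) h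
    simp [hE, Ematrix] at h01

open Fin.NatCast in
theorem disjoint_range_diagonalGL_zpowers (hE : (E : Matrix (Fin 3) (Fin 3) ℂ) = Ematrix) :
    Disjoint (diagonalGL : (Fin 3 → ℂˣ) →* GL (Fin 3) ℂ).range (zpowers E) := by
  have hE3 := orderOf_eq_three hE
  rw [disjoint_def]
  rintro _ ⟨v, rfl⟩ hv
  obtain ⟨f, hf⟩ := ((orderOf_pos_iff.mp (by omega)).mem_powers_iff_mem_zpowers).mpr hv
  have h00 := congrArg (fun M : GL (Fin 3) ℂ => (M : Matrix (Fin 3) (Fin 3) ℂ) 0 0) hf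
  simp only [Units.val_pow_eq_pow_val, hE, Ematrix_pow_apply, diagonalGL_val, diagonal_apply_eq,
    zero_add] at h00
  have hf3 : (f : Fin 3) = 0 := by
    by_contra h
    rw [if_neg (Ne.symm h)] at h00
    exact (v 0).ne_zero h00.symm
  rw [← hf, ← orderOf_dvd_iff_pow_eq_one, hE3, ← Fin.natCast_eq_zero]
  exact hf3

theorem zpowers_le_normalizer_map_diagonalGL (hE : (E : Matrix (Fin 3) (Fin 3) ℂ) = Ematrix)
    {A : Subgroup (Fin 3 → ℂˣ)} [Finite A] (hA : A.map cycleShift ≤ A) :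
    zpowers E ≤ normalizer (A.map diagonalGL : Set (GL (Fin 3) ℂ)) := by
  rw [zpowers_le]
  have : Finite (A.map diagonalGL : Set (GL (Fin 3) ℂ)) := by
    rw [coe_map]; infer_instance
  refine mem_normalizer_fintype ?_
  rintro _ ⟨v, hv, rfl⟩
  rw [conj_diagonalGL hE]
  exact mem_map_of_mem _ (hA (mem_map_of_mem _ hv))

end Ematrix

section DiagonalSubgroup

variable {K : Type*} [CommGroup K]

def y1Diag (μ ω : K) : Fin 3 → K := ![μ, μ * ω, μ * ω ^ 2]

def lDiag (ν : K) : Fin 3 → K := ![1, ν, ν⁻¹]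

def diagSubgroup (μ ω ν : K) : Subgroup (Fin 3 → K) :=
  zpowers (y1Diag μ ω) ⊔ (zpowers (lDiag ν) ⊔ zpowers (cycleShift (lDiag ν)))

theorem y1Diag_mem_zpowers {μ ω : K} (hω : ω ∈ zpowers μ) (i : Fin 3) :
    y1Diag μ ω i ∈ zpowers μ := by
  fin_cases i
  · exact mem_zpowers _
  · exact mul_mem (mem_zpowers _) hω
  · exact mul_mem (mem_zpowers _) (pow_mem hω _)

theorem lDiag_mem_zpowers (ν : K) (i : Fin 3) : lDiag ν i ∈ zpowers ν := by
  fin_cases i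
  · exact one_mem _
  · exact mem_zpowers _
  · exact inv_mem (mem_zpowers _)

theorem cycleShift_y1Diag {μ ω : K} {t : ℕ} (hμ : μ ^ t = ω) (ht : 3 ∣ t) (hω : ω ^ 3 = 1) :
    cycleShift (y1Diag μ ω) = y1Diag μ ω ^ (t + 1) := by
  have hωt : ω ^ t = 1 := by
    obtain ⟨s, rfl⟩ := ht
    rw [pow_mul, hω, one_pow]
  funext i
  fin_cases i
  · show μ * ω = μ ^ (t + 1)
    rw [pow_succ, hμ, mul_comm]
  · show μ * ω ^ 2 = (μ * ω) ^ (t + 1)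
    rw [mul_pow, pow_succ μ, pow_succ ω t, hμ, hωt, one_mul, sq]
    ac_rfl
  · show μ = (μ * ω ^ 2) ^ (t + 1)
    rw [mul_pow, ← pow_mul, mul_comm 2, pow_mul, pow_succ μ, pow_succ ω t, hμ, hωt, one_mul,
      mul_right_comm, ← pow_succ', hω, one_mul]

theorem cycleShift_cycleShift_lDiag (ν : K) :
    cycleShift (cycleShift (lDiag ν)) = (lDiag ν * cycleShift (lDiag ν))⁻¹ := by
  funext i
  fin_cases i <;> simp [lDiag]

theorem map_cycleShift_diagSubgroup_le {μ ω : K} {t : ℕ} (hμ : μ ^ t = ω) (ht : 3 ∣ t)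
    (hω : ω ^ 3 = 1) (ν : K) :
    (diagSubgroup μ ω ν).map cycleShift ≤ diagSubgroup μ ω ν := by
  simp only [diagSubgroup, Subgroup.map_sup, MonoidHom.map_zpowers, cycleShift_y1Diag hμ ht hω,
    cycleShift_cycleShift_lDiag, sup_le_iff, zpowers_le]
  refine ⟨mem_sup_left (pow_mem (mem_zpowers _) _), mem_sup_right (mem_sup_right (mem_zpowers _)),
    mem_sup_right (inv_mem (mul_mem ?_ ?_))⟩
  exacts [mem_sup_left (mem_zpowers _), mem_sup_right (mem_zpowers _)]

theorem disjoint_zpowers_lDiag (ν : K) :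
    Disjoint (zpowers (lDiag ν)) (zpowers (cycleShift (lDiag ν))) := by
  rw [disjoint_def]
  rintro x hx hx'
  obtain ⟨b, rfl⟩ := mem_zpowers_iff.mp hx
  obtain ⟨c, hc⟩ := mem_zpowers_iff.mp hx'
  have hν : ν ^ c = 1 := by simpa [lDiag] using congrFun hc 0
  rw [← hc]
  exact (Pi.zpow_eq_one_iff_of_forall_mem_zpowers (v := cycleShift (lDiag ν)) (i₀ := 0)
    (fun i => lDiag_mem_zpowers ν (i + 1)) c).mpr hν

theorem card_diagSubgroup {μ ω ν : K} {m n : ℕ} (hμ : orderOf μ = 3 ^ m) (hν : orderOf ν = n)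
    (hn : ¬ 3 ∣ n) (hω : ω ∈ zpowers μ) :
    Nat.card (diagSubgroup μ ω ν) = 3 ^ m * n ^ 2 := by
  have hy : orderOf (y1Diag μ ω) = 3 ^ m := by
    rw [Pi.orderOf_eq_of_forall_mem_zpowers (i₀ := 0) (y1Diag_mem_zpowers hω)]
    exact hμ
  have hl : orderOf (lDiag ν) = n := by
    rw [Pi.orderOf_eq_of_forall_mem_zpowers (i₀ := 1) (lDiag_mem_zpowers ν)]
    exact hν
  have hl' : orderOf (cycleShift (lDiag ν)) = n := by
    rw [Pi.orderOf_eq_of_forall_mem_zpowers (i₀ := 0) fun i => lDiag_mem_zpowers ν (i + 1)]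
    exact hν
  have hL : Nat.card ↥(zpowers (lDiag ν) ⊔ zpowers (cycleShift (lDiag ν))) = n ^ 2 := by
    rw [card_sup_eq_mul_of_le_normalizer le_normalizer_of_normal (disjoint_zpowers_lDiag ν),
      Nat.card_zpowers, Nat.card_zpowers, hl, hl', sq]
  have hcop : Nat.Coprime (3 ^ m) (n ^ 2) :=
    Nat.Coprime.pow _ _ (Nat.prime_three.coprime_iff_not_dvd.mpr hn)
  have hdisj : Disjoint (zpowers (y1Diag μ ω))
      (zpowers (lDiag ν) ⊔ zpowers (cycleShift (lDiag ν))) :=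
    disjoint_of_coprime_natCard (by rw [Nat.card_zpowers, hy, hL]; exact hcop)
  rw [diagSubgroup, card_sup_eq_mul_of_le_normalizer le_normalizer_of_normal hdisj,
    Nat.card_zpowers, hy, hL]

end DiagonalSubgroup

theorem card_closure_Ematrix_diagonalGL {E : GL (Fin 3) ℂ}
    (hE : (E : Matrix (Fin 3) (Fin 3) ℂ) = Ematrix) {μ ν : ℂˣ} {k n : ℕ}
    (hμ : orderOf μ = 3 ^ (k + 2)) (hν : orderOf ν = n) (hn : ¬ 3 ∣ n) :
    Nat.card ↥(closure {E, diagonalGL (lDiag ν), diagonalGL (y1Diag μ (μ ^ 3 ^ (k + 1)))} :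
        Subgroup (GL (Fin 3) ℂ)) = 3 ^ (k + 3) * n ^ 2 := by
  have hω3 : (μ ^ 3 ^ (k + 1)) ^ 3 = 1 := by
    rw [← pow_mul, ← pow_succ, ← hμ, pow_orderOf_eq_one]
  have hcard := card_diagSubgroup hμ hν hn (pow_mem (mem_zpowers μ) (3 ^ (k + 1)))
  have hn0 : n ≠ 0 := by
    rintro rfl
    exact hn (dvd_zero 3)
  have : Finite (diagSubgroup μ (μ ^ 3 ^ (k + 1)) ν) := Nat.finite_of_card_ne_zero <| by
    rw [hcard]
    exact mul_ne_zero (by positivity) (pow_ne_zero 2 hn0)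
  rw [closure_triple_eq_sup, Ematrix.conj_diagonalGL hE, ← MonoidHom.map_zpowers,
    ← MonoidHom.map_zpowers, ← MonoidHom.map_zpowers, ← Subgroup.map_sup, ← Subgroup.map_sup]
  change Nat.card ↥((diagSubgroup μ (μ ^ 3 ^ (k + 1)) ν).map diagonalGL ⊔ zpowers E) = _
  rw [card_sup_eq_mul_of_le_normalizer
      (Ematrix.zpowers_le_normalizer_map_diagonalGL hE
        (map_cycleShift_diagSubgroup_le rfl (dvd_pow_self 3 k.succ_ne_zero) hω3 ν))
      ((Ematrix.disjoint_range_diagonalGL_zpowers hE).mono_left (map_le_range _ _)),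
    card_map_of_injective diagonalGL_injective, hcard, Nat.card_zpowers,
    Ematrix.orderOf_eq_three hE]
  ring

theorem Complex.exp_div_pow_succ_pow (z : ℂ) {d : ℕ} (hd : d ≠ 0) (k : ℕ) :
    Complex.exp (z / (d : ℂ) ^ (k + 1)) ^ d ^ k = Complex.exp (z / d) := by
  rw [← Complex.exp_nat_mul]
  congr 1
  have : (d : ℂ) ≠ 0 := Nat.cast_ne_zero.mpr hd
  field_simp
  push_cast
  ring

/-- The group `W(n, m)`, generated by `E`, `L_n` and `Y₁(m)` inside `GL(3,ℂ)`,
has order `3^{m+1}·n²`. -/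
theorem Wnm_order (n : ℕ) (hn : 0 < n) (hn3 : ¬ 3 ∣ n)
    (m : ℕ) (hm : 2 ≤ m)
    (E L Y : GL (Fin 3) ℂ)
    (hE : E.val = Ematrix) (hL : L.val = Lmatrix n) (hY : Y.val = Y1matrix m) :
    Nat.card ↥(Subgroup.closure ({E, L, Y} : Set (GL (Fin 3) ℂ)))
      = 3 ^ (m + 1) * n ^ 2 := by
  obtain ⟨k, rfl⟩ : ∃ k, m = k + 2 := ⟨m - 2, by omega⟩
  have hν := Complex.isPrimitiveRoot_exp n hn.ne'
  have hμ : IsPrimitiveRoot (Complex.exp (2 * Real.pi * Complex.I / (3 : ℂ) ^ (k + 2)))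
      (3 ^ (k + 2)) := by
    simpa using Complex.isPrimitiveRoot_exp (3 ^ (k + 2)) (by positivity)
  set ν : ℂˣ := (hν.isUnit hn.ne').unit
  set μ : ℂˣ := (hμ.isUnit (by positivity)).unit
  have hω : ((μ ^ 3 ^ (k + 1) : ℂˣ) : ℂ) = Complex.exp (2 * Real.pi * Complex.I / 3) := by
    rw [Units.val_pow_eq_pow_val, IsUnit.unit_spec]
    simpa using Complex.exp_div_pow_succ_pow (2 * Real.pi * Complex.I) three_ne_zero (k + 1)
  have hYμ : Y = diagonalGL (y1Diag μ (μ ^ 3 ^ (k + 1))) := by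
    ext : 1
    rw [hY, diagonalGL_val, Y1matrix]
    congr 1
    funext i
    fin_cases i <;> simp [y1Diag, hω, μ]
  have hLν : L = diagonalGL (lDiag ν) := by
    ext : 1
    rw [hL, diagonalGL_val, Lmatrix]
    congr 1
    funext i
    fin_cases i <;> simp [lDiag, ν]
  rw [hYμ, hLν, card_closure_Ematrix_diagonalGL hE
    (IsPrimitiveRoot.coe_units_iff.mp hμ).eq_orderOf.symm
    (IsPrimitiveRoot.coe_units_iff.mp hν).eq_orderOf.symm hn3]
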